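/- Quantum Fano inequality: for a pure state |ψ⟩ ∈ H_RA with dim H_RA = d², any density operator ρ on H_RA with p = ⟨ψ|ρ|ψ⟩ satisfies S(ρ) ≤ h₂(p) + (1−p)·log₂(d² − 1), where S is the von Neumann entropy in bits. -/
import Mathlib


open scoped ComplexOrder
open Matrix

section FanoAux

open Finset

/-- Classical per-entry Fano bound with natural log. -/
private lemma fano_entry' {n : ℕ} (hn : 2 ≤ n) (lam : Fin n → ℝ)
    (h0 : ∀ i, 0 ≤ lam i) (h1 : ∑ i, lam i = 1) (j : Fin n) :
    ∑ i, Real.negMulLog (lam i) ≤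
      Real.negMulLog (lam j) + Real.negMulLog (1 - lam j)
        + (1 - lam j) * Real.log ((n : ℝ) - 1) := by
  classical
  set m : ℝ := (n : ℝ) - 1 with hmdef
  have hcard : ((univ.erase j).card : ℝ) = m := by
    rw [Finset.card_erase_of_mem (mem_univ j), Finset.card_univ, Fintype.card_fin,
      Nat.cast_sub (by omega : 1 ≤ n)]
    simp [hmdef]
  have hm : (0:ℝ) < m := by
    have : (2:ℝ) ≤ (n:ℝ) := by exact_mod_cast hn
    simp only [hmdef]; linarith
  have ht : ∑ i ∈ univ.erase j, lam i = 1 - lam j := by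
    have h2 := Finset.add_sum_erase univ lam (mem_univ j)
    rw [h1] at h2
    linarith
  have hjen := Real.concaveOn_negMulLog.le_map_sum (t := univ.erase j)
    (w := fun _ => m⁻¹) (p := fun i => m * lam i)
    (fun i _ => by positivity)
    (by rw [Finset.sum_const, nsmul_eq_mul, hcard, mul_inv_cancel₀ hm.ne'])
    (fun i _ => Set.mem_Ici.2 (by have := h0 i; positivity))
  have hpt : ∑ i ∈ univ.erase j, m⁻¹ • (m * lam i) = 1 - lam j := by
    simp only [smul_eq_mul, ← mul_assoc, inv_mul_cancel₀ hm.ne', one_mul, ht]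
  rw [hpt] at hjen
  have hLHS : ∑ i ∈ univ.erase j, m⁻¹ • Real.negMulLog (m * lam i)
      = (∑ i ∈ univ.erase j, Real.negMulLog (lam i)) - (1 - lam j) * Real.log m := by
    rw [← ht, Finset.sum_mul, ← Finset.sum_sub_distrib]
    refine Finset.sum_congr rfl fun i _ => ?_
    rw [Real.negMulLog_mul, smul_eq_mul]
    have : Real.negMulLog m = -m * Real.log m := rfl
    rw [this]
    field_simp
    ring
  rw [hLHS] at hjen
  have hsplit : ∑ i, Real.negMulLog (lam i)
      = Real.negMulLog (lam j) + ∑ i ∈ univ.erase j, Real.negMulLog (lam i) :=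
    (Finset.add_sum_erase univ (fun i => Real.negMulLog (lam i)) (mem_univ j)).symm
  rw [hsplit]
  linarith

private lemma concaveF' (c : ℝ) :
    ConcaveOn ℝ (Set.Icc (0:ℝ) 1)
      (fun x => Real.negMulLog x + Real.negMulLog (1 - x) + (1 - x) * c) := by
  have h1 : ConcaveOn ℝ (Set.Icc (0:ℝ) 1) Real.negMulLog :=
    Real.concaveOn_negMulLog.subset (fun x hx => hx.1) (convex_Icc 0 1)
  have h2 : ConcaveOn ℝ (Set.Icc (0:ℝ) 1) (fun x => Real.negMulLog (1 - x)) := by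
    refine ⟨convex_Icc 0 1, fun x hx y hy a b ha hb hab => ?_⟩
    have key := Real.concaveOn_negMulLog.2 (x := 1 - x) (y := 1 - y)
      (Set.mem_Ici.2 (by linarith [hx.2])) (Set.mem_Ici.2 (by linarith [hy.2])) ha hb hab
    simp only [smul_eq_mul] at key ⊢
    have : 1 - (a * x + b * y) = a * (1 - x) + b * (1 - y) := by linarith
    rw [this]
    exact key
  have h3 : ConcaveOn ℝ (Set.Icc (0:ℝ) 1) (fun x => (1 - x) * c) := by
    refine ⟨convex_Icc 0 1, fun x hx y hy a b ha hb hab => ?_⟩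
    simp only [smul_eq_mul]
    have : a * ((1 - x) * c) + b * ((1 - y) * c) = (1 - (a * x + b * y)) * c := by
      linear_combination c * hab
    linarith [this.le]
  exact (h1.add h2).add h3

private lemma fano_classical' {n : ℕ} (hn : 2 ≤ n) (lam c : Fin n → ℝ)
    (h0 : ∀ i, 0 ≤ lam i) (h1 : ∑ i, lam i = 1)
    (hc0 : ∀ i, 0 ≤ c i) (hc1 : ∑ i, c i = 1) :
    ∑ i, Real.negMulLog (lam i) ≤
      Real.negMulLog (∑ i, c i * lam i) + Real.negMulLog (1 - ∑ i, c i * lam i)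
        + (1 - ∑ i, c i * lam i) * Real.log ((n : ℝ) - 1) := by
  classical
  set L : ℝ := Real.log ((n : ℝ) - 1) with hL
  set F : ℝ → ℝ := fun x => Real.negMulLog x + Real.negMulLog (1 - x) + (1 - x) * L with hF
  have hmem : ∀ i, lam i ∈ Set.Icc (0:ℝ) 1 := fun i =>
    ⟨h0 i, by
      have := Finset.single_le_sum (f := lam) (fun i _ => h0 i) (mem_univ i)
      rw [h1] at this; exact this⟩
  have hjen := (concaveF' L).le_map_sum (t := univ) (w := c) (p := lam)
    (fun i _ => hc0 i) hc1 (fun i _ => hmem i)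
  simp only [smul_eq_mul] at hjen
  have step1 : ∑ i, Real.negMulLog (lam i) ≤ ∑ i, c i * F (lam i) := by
    calc ∑ i, Real.negMulLog (lam i)
        = ∑ j, c j * ∑ i, Real.negMulLog (lam i) := by
          rw [← Finset.sum_mul, hc1, one_mul]
      _ ≤ ∑ j, c j * F (lam j) :=
          Finset.sum_le_sum fun j _ =>
            mul_le_mul_of_nonneg_left (fano_entry' hn lam h0 h1 j) (hc0 j)
  exact step1.trans hjen

end FanoAux

/-- Binary entropy function (in bits). -/
noncomputable def binEnt (x : ℝ) : ℝ :=
  -(x * Real.logb 2 x) - (1 - x) * Real.logb 2 (1 - x)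

/-- quantum Fano inequality: for a unit vector `ψ ∈ ℂ^{d²}` and a
density operator `ρ` with `p = ⟨ψ|ρ|ψ⟩`, the von Neumann entropy (in bits) of `ρ`
satisfies `S(ρ) ≤ h₂(p) + (1−p) log₂(d² − 1)`. -/
theorem quantum_fano_inequality
    {d : ℕ} (hd : 2 ≤ d)
    (ψ : Fin (d ^ 2) → ℂ) (hψ : star ψ ⬝ᵥ ψ = 1)
    (ρ : Matrix (Fin (d ^ 2)) (Fin (d ^ 2)) ℂ)
    (hρ : ρ.PosSemidef) (hρtr : ρ.trace = 1)
    (p : ℝ) (hp : p = (star ψ ⬝ᵥ ρ.mulVec ψ).re) :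
    - ∑ i, (hρ.1.eigenvalues i) * Real.logb 2 (hρ.1.eigenvalues i)
      ≤ binEnt p + (1 - p) * Real.logb 2 ((d : ℝ) ^ 2 - 1) := by
  classical
  have hH : ρ.IsHermitian := hρ.1
  set U : Matrix (Fin (d ^ 2)) (Fin (d ^ 2)) ℂ :=
    (hH.eigenvectorUnitary : Matrix (Fin (d ^ 2)) (Fin (d ^ 2)) ℂ) with hU
  set lam : Fin (d ^ 2) → ℝ := hH.eigenvalues with hlam
  set D : Matrix (Fin (d ^ 2)) (Fin (d ^ 2)) ℂ := diagonal (RCLike.ofReal ∘ lam) with hD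
  have hspec : ρ = U * D * star U := hH.spectral_theorem
  have hU1 : star U * U = 1 := Unitary.coe_star_mul_self hH.eigenvectorUnitary
  have hU2 : U * star U = 1 := Unitary.coe_mul_star_self hH.eigenvectorUnitary
  set φ : Fin (d ^ 2) → ℂ := star U *ᵥ ψ with hφ
  set c : Fin (d ^ 2) → ℝ := fun i => Complex.normSq (φ i) with hc
  have hsφ : star φ = star ψ ᵥ* U := by
    rw [hφ, star_mulVec, star_eq_conjTranspose, conjTranspose_conjTranspose]
  have hsum_c : ∑ i, c i = 1 := by
    have h1 : star φ ⬝ᵥ φ = 1 := by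
      rw [hsφ, hφ, ← dotProduct_mulVec, mulVec_mulVec, hU2, one_mulVec, hψ]
    have h2 : star φ ⬝ᵥ φ = ∑ i, ((c i : ℝ) : ℂ) := by
      simp only [dotProduct, Pi.star_apply, hc, Complex.star_def,
        ← Complex.normSq_eq_conj_mul_self]
    rw [h2] at h1
    exact_mod_cast h1
  have hsum_lam : ∑ i, lam i = 1 := by
    have h1 : ρ.trace = ∑ i, ((lam i : ℝ) : ℂ) := by
      rw [hspec, trace_mul_cycle, hU1, one_mul, hD, trace_diagonal]
      simp
    rw [hρtr] at h1
    exact_mod_cast h1.symm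
  have hps : p = ∑ i, c i * lam i := by
    have h1 : star ψ ⬝ᵥ ρ.mulVec ψ = star φ ⬝ᵥ (D *ᵥ φ) := by
      rw [hspec, mul_assoc, ← mulVec_mulVec, dotProduct_mulVec, ← hsφ, ← mulVec_mulVec]
    have h2 : star φ ⬝ᵥ (D *ᵥ φ) = ∑ i, ((c i * lam i : ℝ) : ℂ) := by
      simp only [dotProduct, Pi.star_apply, hD, mulVec_diagonal, Function.comp_apply]
      refine Finset.sum_congr rfl fun i _ => ?_
      calc star (φ i) * ((lam i : ℂ) * φ i) = (lam i : ℂ) * (star (φ i) * φ i) := by ring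
        _ = ((c i * lam i : ℝ) : ℂ) := by
            rw [Complex.star_def, ← Complex.normSq_eq_conj_mul_self, hc]
            push_cast
            ring
    rw [hp, h1, h2, ← Complex.ofReal_sum, Complex.ofReal_re]
  -- classical Fano applied to the eigenvalues
  have hn2 : 2 ≤ d ^ 2 := by nlinarith
  have key := fano_classical' hn2 lam c (fun i => hρ.eigenvalues_nonneg i) hsum_lam
    (fun i => Complex.normSq_nonneg _) hsum_c
  rw [← hps] at key
  -- convert natural log to log base 2
  have hlog2 : (0:ℝ) < Real.log 2 := Real.log_pos one_lt_two
  have hcast : ((d ^ 2 : ℕ) : ℝ) - 1 = (d : ℝ) ^ 2 - 1 := by push_cast; ring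
  rw [hcast] at key
  have hLHS : - ∑ i, lam i * Real.logb 2 (lam i)
      = (∑ i, Real.negMulLog (lam i)) / Real.log 2 := by
    rw [Finset.sum_div, ← Finset.sum_neg_distrib]
    refine Finset.sum_congr rfl fun i _ => ?_
    simp only [Real.logb, Real.negMulLog]
    ring
  have hRHS : binEnt p + (1 - p) * Real.logb 2 ((d : ℝ) ^ 2 - 1)
      = (Real.negMulLog p + Real.negMulLog (1 - p)
          + (1 - p) * Real.log ((d : ℝ) ^ 2 - 1)) / Real.log 2 := by
    simp only [binEnt, Real.logb, Real.negMulLog]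
    field_simp
    ring
  rw [hLHS, hRHS]
  exact (div_le_div_iff_of_pos_right hlog2).mpr key
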